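/- If an r-uniform hypergraph H contains no copy of a given r-tree T with t edges, then H admits a proper coloring with t colors. -/

import Mathlib

open Finset

structure FinsetHypergraph (V : Type*) where
  edges : Finset (Finset V)

namespace FinsetHypergraph

variable {V : Type*} [DecidableEq V]

/-- `H` is `r`-uniform: every edge has exactly `r` vertices. -/
def Uniform (H : FinsetHypergraph V) (r : ℕ) : Prop := ∀ e ∈ H.edges, e.card = r

/-- Two vertices are adjacent if some edge contains both. -/
def adj (H : FinsetHypergraph V) (u w : V) : Prop := ∃ e ∈ H.edges, u ∈ e ∧ w ∈ e

/-- `H` is connected: any two vertices are joined by a walk. -/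
def Connected (H : FinsetHypergraph V) : Prop := ∀ u w : V, Relation.ReflTransGen H.adj u w

/-- No two distinct edges intersect in more than one vertex. -/
def Linear (H : FinsetHypergraph V) : Prop :=
  ∀ e ∈ H.edges, ∀ f ∈ H.edges, e ≠ f → (e ∩ f).card ≤ 1

/-- A Berge cycle: distinct vertices `v 0, …, v (k-1)` and distinct edges
`e 0, …, e (k-1)`, `k ≥ 2`, with `{v i, v (i+1)} ⊆ e i` cyclically. -/
def HasBergeCycle (H : FinsetHypergraph V) : Prop :=
  ∃ k : ℕ, ∃ _ : 2 ≤ k, ∃ (v : Fin k → V) (e : Fin k → Finset V),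
    Function.Injective v ∧ Function.Injective e ∧
    (∀ i, e i ∈ H.edges) ∧
    (∀ i : Fin k, v i ∈ e i ∧ v ⟨(i.val + 1) % k, Nat.mod_lt _ (by omega)⟩ ∈ e i)

/-- A hypertree: connected, linear, with no Berge cycle. -/
def IsHypertree (H : FinsetHypergraph V) : Prop :=
  H.Connected ∧ H.Linear ∧ ¬ H.HasBergeCycle

/-- A proper coloring: no edge is monochromatic. -/
def Proper (H : FinsetHypergraph V) {k : ℕ} (c : V → Fin k) : Prop :=
  ∀ e ∈ H.edges, ¬ ∀ u ∈ e, ∀ w ∈ e, c u = c w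

/-- The chromatic number: least number of colors in a proper coloring. -/
noncomputable def chromaticNumber (H : FinsetHypergraph V) : ℕ :=
  sInf {k | ∃ c : V → Fin k, H.Proper c}

/-- `H` contains a copy of `T`: an injective vertex map sending edges to edges. -/
def ContainsCopy {W : Type*} [DecidableEq W] (H : FinsetHypergraph V) (T : FinsetHypergraph W) : Prop :=
  ∃ φ : W → V, Function.Injective φ ∧ ∀ e ∈ T.edges, e.image φ ∈ H.edges

end FinsetHypergraph

/-- The complete `r`-uniform hypergraph on `Fin n`. -/
def completeHypergraph (n r : ℕ) : FinsetHypergraph (Fin n) :=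
  ⟨Finset.univ.powersetCard r⟩

/-!
Order the edges of the tree as `g 0, g 1, …` so that each `g i` with `i > 0` meets the union of
its predecessors in exactly one vertex: connectivity lets a greedy choice meet that union, and a
second common vertex would close a Berge cycle with a Berge path through the earlier edges.

Then induct on `t`. Repeatedly delete from `H` a vertex that is the image of the attaching vertex
of `g t` in a copy of the first `t` edges lying in what remains. The deleted vertices get the new
colour, and the rest is coloured by induction, since no such copy is left there. If an edge `e`
consists of deleted vertices only, the copy rooted at the last of them to be deleted avoids the
rest of `e`; sending `g t` onto `e` extends it to a copy of the whole tree.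
-/

theorem Finset.exists_injOn_union_image_eq {α β : Type*} [DecidableEq α] [DecidableEq β]
    [Nonempty β] {s d : Finset α} {t : Finset β} {f : α → β} (hf : Set.InjOn f s)
    (hsd : Disjoint s d) (hft : Disjoint (s.image f) t) (hcard : #d = #t) :
    ∃ g : α → β, Set.EqOn g f s ∧ Set.InjOn g ↑(s ∪ d) ∧ d.image g = t := by
  obtain ⟨b, hb⟩ := (d : Set α).toFinite.exists_bijOn_of_encard_eq (t := (t : Set β))
    (by simp [hcard])
  have hsd' : Disjoint (s : Set α) d := disjoint_coe.mpr hsd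
  have heq_f : Set.EqOn ((d : Set α).piecewise b f) f s := fun x hx =>
    Set.piecewise_eq_of_notMem _ _ _ (hsd'.notMem_of_mem_left hx)
  have heq_b : Set.EqOn ((d : Set α).piecewise b f) b d := Set.piecewise_eqOn _ _ _
  refine ⟨(d : Set α).piecewise b f, heq_f, ?_, ?_⟩
  · rw [coe_union, Set.injOn_union hsd']
    refine ⟨hf.congr heq_f.symm, hb.injOn.congr heq_b.symm, ?_⟩
    intro x hx y hy hxy
    rw [heq_f hx, heq_b hy] at hxy
    refine disjoint_left.mp hft (mem_image_of_mem f hx) ?_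
    exact hxy ▸ (hb.mapsTo hy : b y ∈ (t : Set β))
  · rw [← coe_inj, coe_image, heq_b.image_eq, hb.image_eq]

/-- `L` collects vertices deleted from `S` one at a time, each satisfying `R` in what is left at
its deletion; within any `A ⊆ L`, the vertex of `A` deleted last is the required `u`. -/
theorem Finset.exists_peeling {V : Type*} [DecidableEq V] (R : Finset V → V → Prop)
    (hmono : ∀ ⦃S S' u⦄, S ⊆ S' → R S u → R S' u)
    (hmem : ∀ ⦃S u⦄, R S u → u ∈ S) (S : Finset V) :
    ∃ L : Finset V, (∀ u, ¬ R (S \ L) u) ∧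
      ∀ A ⊆ L, A.Nonempty → ∃ u ∈ A, R (S \ A.erase u) u := by
  induction S using Finset.strongInduction with
  | H S ih =>
  by_cases hS : ∃ v, R S v
  · obtain ⟨v, hv⟩ := hS
    obtain ⟨L, hL, hpeel⟩ := ih (S.erase v) (erase_ssubset (hmem hv))
    refine ⟨insert v L, by rwa [sdiff_insert, ← erase_sdiff_comm], fun A hAL hA => ?_⟩
    by_cases hvA : v ∈ A
    · by_cases hA' : (A.erase v).Nonempty
      · obtain ⟨u, hu, hRu⟩ := hpeel (A.erase v)
          (fun x hx => (mem_insert.mp (hAL (mem_of_mem_erase hx))).resolve_left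
            (ne_of_mem_erase hx)) hA'
        refine ⟨u, mem_of_mem_erase hu, ?_⟩
        have hdiff : S.erase v \ (A.erase v).erase u = S \ A.erase u := by
          ext x
          simp only [mem_sdiff, mem_erase]
          have := ne_of_mem_erase hu
          grind
        rwa [← hdiff]
      · refine ⟨v, hvA, ?_⟩
        rwa [not_nonempty_iff_eq_empty.mp hA', sdiff_empty]
    · obtain ⟨u, hu, hRu⟩ := hpeel A ((subset_insert_iff_of_notMem hvA).mp hAL) hA
      exact ⟨u, hu, hmono (sdiff_subset_sdiff (erase_subset v S) le_rfl) hRu⟩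
  · push Not at hS
    refine ⟨∅, by simpa using hS, fun A hA hne => ?_⟩
    rw [subset_empty.mp hA] at hne
    exact absurd hne not_nonempty_empty

namespace FinsetHypergraph

variable {W : Type*}

structure BergePath (E : Set (Finset W)) (x y : W) where
  length : ℕ
  vert : Fin (length + 1) → W
  edge : Fin length → Finset W
  vert_injective : Function.Injective vert
  edge_injective : Function.Injective edge
  edge_mem : ∀ i, edge i ∈ E
  vert_castSucc_mem : ∀ i, vert i.castSucc ∈ edge i
  vert_succ_mem : ∀ i, vert i.succ ∈ edge i
  vert_zero : vert 0 = x
  vert_last : vert (Fin.last length) = y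

namespace BergePath

variable {E E' : Set (Finset W)} {x y z : W}

def nil (E : Set (Finset W)) (x : W) : BergePath E x x where
  length := 0
  vert := fun _ => x
  edge := Fin.elim0
  vert_injective := fun i j _ => Subsingleton.elim (α := Fin 1) i j
  edge_injective := fun i => i.elim0
  edge_mem := fun i => i.elim0
  vert_castSucc_mem := fun i => i.elim0
  vert_succ_mem := fun i => i.elim0
  vert_zero := rfl
  vert_last := rfl

def mono (p : BergePath E x y) (h : E ⊆ E') : BergePath E' x y :=
  { p with edge_mem := fun i => h (p.edge_mem i) }

def reverse (p : BergePath E x y) : BergePath E y x where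
  length := p.length
  vert := p.vert ∘ Fin.rev
  edge := p.edge ∘ Fin.rev
  vert_injective := p.vert_injective.comp Fin.rev_injective
  edge_injective := p.edge_injective.comp Fin.rev_injective
  edge_mem := fun i => p.edge_mem _
  vert_castSucc_mem := fun i => by simpa [Fin.rev_castSucc] using p.vert_succ_mem i.rev
  vert_succ_mem := fun i => by simpa [Fin.rev_succ] using p.vert_castSucc_mem i.rev
  vert_zero := by simpa using p.vert_last
  vert_last := by simpa using p.vert_zero

def snoc (p : BergePath E x y) {h : Finset W} (hy : y ∈ h) (hz : z ∈ h)
    (hzp : z ∉ Set.range p.vert) (hhp : h ∉ Set.range p.edge) : BergePath (insert h E) x z where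
  length := p.length + 1
  vert := Fin.snoc p.vert z
  edge := Fin.snoc p.edge h
  vert_injective := Fin.snoc_injective_of_injective p.vert_injective hzp
  edge_injective := Fin.snoc_injective_of_injective p.edge_injective hhp
  edge_mem := Fin.lastCases (by simp) fun i => by simp [p.edge_mem i]
  vert_castSucc_mem := Fin.lastCases (by simpa [← Fin.succ_last, p.vert_last] using hy)
    fun i => by simpa using p.vert_castSucc_mem i
  vert_succ_mem := Fin.lastCases (by simpa using hz)
    fun i => by
      rw [Fin.succ_castSucc, Fin.snoc_castSucc, Fin.snoc_castSucc]
      exact p.vert_succ_mem i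
  vert_zero := by simpa using p.vert_zero
  vert_last := by simp

theorem vert_mem_of_subset {U : Set W} (p : BergePath E x y) (hE : ∀ e ∈ E, ↑e ⊆ U)
    (hx : x ∈ U) (i : Fin (p.length + 1)) : p.vert i ∈ U := by
  cases i using Fin.cases with
  | zero => rw [p.vert_zero]; exact hx
  | succ i => exact hE _ (p.edge_mem i) (p.vert_succ_mem i)

theorem hasBergeCycle {T : FinsetHypergraph W} (p : BergePath E x y) (hxy : x ≠ y)
    (hE : E ⊆ ↑T.edges) {h : Finset W} (hh : h ∈ T.edges) (hhE : h ∉ E) (hx : x ∈ h)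
    (hy : y ∈ h) : T.HasBergeCycle := by
  have hlen : p.length ≠ 0 := by
    intro h0
    apply hxy
    calc x = p.vert 0 := p.vert_zero.symm
      _ = p.vert (Fin.last p.length) := congrArg p.vert (Fin.ext (by simp [h0]))
      _ = y := p.vert_last
  refine ⟨p.length + 1, by omega, p.vert, Fin.snoc p.edge h, p.vert_injective,
    Fin.snoc_injective_of_injective p.edge_injective ?_, ?_, ?_⟩
  · rintro ⟨i, hi⟩
    exact hhE (hi ▸ p.edge_mem i)
  · intro i
    cases i using Fin.lastCases with
    | last => simpa using hh
    | cast i => simpa using hE (p.edge_mem i)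
  · intro i
    cases i using Fin.lastCases with
    | last =>
      have hnext : (⟨(p.length + 1) % (p.length + 1), Nat.mod_lt _ (by omega)⟩ :
          Fin (p.length + 1)) = 0 := Fin.ext (by simp)
      simp only [Fin.val_last, hnext, Fin.snoc_last, p.vert_last, p.vert_zero]
      exact ⟨hy, hx⟩
    | cast i =>
      have hnext : (⟨(i.val + 1) % (p.length + 1), Nat.mod_lt _ (by omega)⟩ :
          Fin (p.length + 1)) = i.succ := Fin.ext (by simp [Nat.mod_eq_of_lt])
      simp only [Fin.val_castSucc, hnext, Fin.snoc_castSucc]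
      exact ⟨p.vert_castSucc_mem i, p.vert_succ_mem i⟩

end BergePath

theorem Connected.exists_mem_edge {T : FinsetHypergraph W} (hT : T.Connected)
    (hne : ∃ e ∈ T.edges, e.Nonempty) (x : W) :
    ∃ e ∈ T.edges, x ∈ e := by
  obtain ⟨e₀, he₀, y, hy⟩ := hne
  rcases (hT x y).cases_head with rfl | ⟨z, ⟨e, he, hxe, -⟩, -⟩
  · exact ⟨e₀, he₀, hy⟩
  · exact ⟨e, he, hxe⟩

end FinsetHypergraph

section PrefixUnion

variable {W : Type*} [DecidableEq W]

def prefixUnion (g : ℕ → Finset W) (k : ℕ) : Finset W := (range k).biUnion g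

variable {g : ℕ → Finset W} {k : ℕ}

@[simp]
theorem mem_prefixUnion {x : W} : x ∈ prefixUnion g k ↔ ∃ j < k, x ∈ g j := by
  simp [prefixUnion]

theorem prefixUnion_succ (g : ℕ → Finset W) (k : ℕ) :
    prefixUnion g (k + 1) = prefixUnion g k ∪ g k := by
  rw [prefixUnion, range_add_one, biUnion_insert, union_comm, prefixUnion]

theorem subset_prefixUnion {j : ℕ} (h : j < k) : g j ⊆ prefixUnion g k :=
  fun _ hx => mem_prefixUnion.mpr ⟨j, h, hx⟩

theorem prefixUnion_congr {g' : ℕ → Finset W} (h : ∀ j < k, g j = g' j) :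
    prefixUnion g k = prefixUnion g' k :=
  biUnion_congr rfl fun j hj => h j (mem_range.mp hj)

end PrefixUnion

namespace FinsetHypergraph

variable {W : Type*} [DecidableEq W] {T : FinsetHypergraph W}

theorem Connected.exists_edge_crossing (hT : T.Connected) {U : Finset W} {x y : W} (hx : x ∈ U)
    (hy : y ∉ U) : ∃ h ∈ T.edges, (h ∩ U).Nonempty ∧ ¬ h ⊆ U := by
  induction hT x y with
  | refl => exact absurd hx hy
  | @tail b c _ hbc ih =>
    obtain ⟨e, he, hb, hc⟩ := hbc
    by_cases hbU : b ∈ U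
    · exact ⟨e, he, ⟨b, mem_inter.mpr ⟨hb, hbU⟩⟩, fun hsub => hy (hsub hc)⟩
    · exact ih hbU

theorem exists_greedy_ordering (hT : T.Connected) (hne : ∀ e ∈ T.edges, e.Nonempty) {k : ℕ}
    (hk : k ≤ #T.edges) :
    ∃ g : ℕ → Finset W, (∀ i < k, g i ∈ T.edges) ∧ Set.InjOn g (Set.Iio k) ∧
      ∀ i, 0 < i → i < k → (g i ∩ prefixUnion g i).Nonempty := by
  induction k with
  | zero => exact ⟨fun _ => ∅, by simp, by simp, by simp⟩
  | succ k ih =>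
    obtain ⟨g, hmem, hinj, hglue⟩ := ih (by omega)
    have hnext : ∃ a ∈ T.edges, (∀ j < k, g j ≠ a) ∧
        (0 < k → (a ∩ prefixUnion g k).Nonempty) := by
      obtain ⟨a, haT, hag⟩ : ∃ a ∈ T.edges, a ∉ (range k).image g := by
        by_contra! h
        have := (card_le_card h).trans card_image_le
        simp only [card_range] at this
        omega
      simp only [mem_image, mem_range, not_exists, not_and] at hag
      by_cases hsub : a ⊆ prefixUnion g k
      · obtain ⟨b, hb⟩ := hne a haT
        exact ⟨a, haT, hag, fun _ => ⟨b, mem_inter.mpr ⟨hb, hsub hb⟩⟩⟩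
      rcases k.eq_zero_or_pos with rfl | hk0
      · exact ⟨a, haT, hag, fun h => absurd h (lt_irrefl 0)⟩
      obtain ⟨b, hba, hbU⟩ := not_subset.mp hsub
      obtain ⟨x, hx⟩ := hne (g 0) (hmem 0 hk0)
      obtain ⟨h, hhT, hhU, hhsub⟩ := hT.exists_edge_crossing (subset_prefixUnion hk0 hx) hbU
      exact ⟨h, hhT, fun j hj hgj => hhsub (hgj ▸ subset_prefixUnion hj), fun _ => hhU⟩
    obtain ⟨a, haT, hag, haU⟩ := hnext
    have hprefix : ∀ i ≤ k, prefixUnion (Function.update g k a) i = prefixUnion g i :=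
      fun i hi => prefixUnion_congr fun j hj => Function.update_of_ne (by omega) _ _
    refine ⟨Function.update g k a, fun i hi => ?_, fun i hi j hj hij => ?_, fun i hi0 hi => ?_⟩
    · rcases (Nat.lt_succ_iff_lt_or_eq.mp hi) with hi | rfl
      · rw [Function.update_of_ne hi.ne]
        exact hmem i hi
      · rwa [Function.update_self]
    · simp only [Set.mem_Iio] at hi hj
      rcases (Nat.lt_succ_iff_lt_or_eq.mp hi) with hi | rfl <;>
        rcases (Nat.lt_succ_iff_lt_or_eq.mp hj) with hj | rfl
      · rw [Function.update_of_ne hi.ne, Function.update_of_ne hj.ne] at hij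
        exact hinj hi hj hij
      · rw [Function.update_of_ne hi.ne, Function.update_self] at hij
        exact absurd hij (hag i hi)
      · rw [Function.update_of_ne hj.ne, Function.update_self] at hij
        exact absurd hij.symm (hag j hj)
      · rfl
    · rw [hprefix i (by omega)]
      rcases (Nat.lt_succ_iff_lt_or_eq.mp hi) with hi | rfl
      · rw [Function.update_of_ne hi.ne]
        exact hglue i hi0 hi
      · rw [Function.update_self]
        exact haU hi0

theorem exists_bergePath_of_prefix {g : ℕ → Finset W} {k : ℕ}
    (hglue : ∀ i, 0 < i → i < k → (g i ∩ prefixUnion g i).Nonempty) {x y : W}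
    (hx : x ∈ prefixUnion g k) (hy : y ∈ prefixUnion g k) :
    Nonempty (BergePath (g '' Set.Iio k) x y) := by
  induction k generalizing x y with
  | zero => simp at hx
  | succ k ih =>
    have ih' {x y : W} (hx : x ∈ prefixUnion g k) (hy : y ∈ prefixUnion g k) :=
      ih (fun i hi0 hi => hglue i hi0 (by omega)) hx hy
    have hE : g '' Set.Iio k ⊆ g '' Set.Iio (k + 1) :=
      Set.image_mono (Set.Iio_subset_Iio k.le_succ)
    have hE' : insert (g k) (g '' Set.Iio k) ⊆ g '' Set.Iio (k + 1) :=
      Set.insert_subset ⟨k, by simp, rfl⟩ hE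
    have hold : ∀ e ∈ g '' Set.Iio k, ↑e ⊆ (↑(prefixUnion g k) : Set W) := by
      rintro _ ⟨j, hj, rfl⟩
      exact coe_subset.mpr (subset_prefixUnion hj)
    have hnew : ∀ x ∈ prefixUnion g (k + 1), ∀ z ∈ g k, z ∉ prefixUnion g k →
        Nonempty (BergePath (g '' Set.Iio (k + 1)) x z) := by
      intro x hx z hz hzU
      by_cases hxz : x = z
      · exact hxz ▸ ⟨BergePath.nil _ x⟩
      obtain ⟨c, hc, ⟨p⟩⟩ : ∃ c ∈ g k, Nonempty (BergePath (g '' Set.Iio k) x c) := by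
        rcases mem_union.mp ((prefixUnion_succ g k) ▸ hx) with hx | hx
        · have hk0 : 0 < k := by
            obtain ⟨j, hj, -⟩ := mem_prefixUnion.mp hx
            omega
          obtain ⟨c, hc⟩ := hglue k hk0 k.lt_succ_self
          exact ⟨c, (mem_inter.mp hc).1, ih' hx (mem_inter.mp hc).2⟩
        · exact ⟨x, hx, ⟨BergePath.nil _ x⟩⟩
      have hzp : z ∉ Set.range p.vert := by
        rintro ⟨i, rfl⟩
        rcases p.vert_mem_of_subset (U := ↑(prefixUnion g k) ∪ {x})
            (fun e he => (hold e he).trans Set.subset_union_left) (Or.inr rfl) i with h | h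
        · exact hzU h
        · exact hxz h.symm
      have hkp : g k ∉ Set.range p.edge := by
        rintro ⟨i, hi⟩
        exact hzU (hold _ (p.edge_mem i) (hi ▸ hz))
      exact ⟨(p.snoc hc hz hzp hkp).mono hE'⟩
    rw [prefixUnion_succ, mem_union] at hx hy
    by_cases hyU : y ∈ prefixUnion g k
    · by_cases hxU : x ∈ prefixUnion g k
      · exact (ih' hxU hyU).map (·.mono hE)
      · exact (hnew y ((prefixUnion_succ g k) ▸ mem_union_left _ hyU) x (hx.resolve_left hxU)
          hxU).map BergePath.reverse
    · exact hnew x ((prefixUnion_succ g k) ▸ mem_union.mpr hx) y (hy.resolve_left hyU) hyU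

theorem card_inter_prefixUnion_le_one (hnc : ¬ T.HasBergeCycle) {g : ℕ → Finset W} {k : ℕ}
    (hmem : ∀ i < k, g i ∈ T.edges) (hinj : Set.InjOn g (Set.Iio k))
    (hglue : ∀ i, 0 < i → i < k → (g i ∩ prefixUnion g i).Nonempty) {i : ℕ} (hi : i < k) :
    #(g i ∩ prefixUnion g i) ≤ 1 := by
  by_contra! h
  obtain ⟨x, hx, y, hy, hxy⟩ := one_lt_card.mp h
  rw [mem_inter] at hx hy
  obtain ⟨p⟩ := exists_bergePath_of_prefix (fun j hj0 hj => hglue j hj0 (hj.trans hi)) hx.2 hy.2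
  refine hnc (p.hasBergeCycle hxy ?_ (hmem i hi) ?_ hx.1 hy.1)
  · rintro _ ⟨j, hj, rfl⟩
    exact hmem j (lt_trans hj hi)
  · rintro ⟨j, hj, hgj⟩
    exact (ne_of_lt hj) (hinj (lt_trans hj hi) hi hgj)

theorem exists_tree_ordering (hT : T.Connected) (hnc : ¬ T.HasBergeCycle)
    (hne : ∀ e ∈ T.edges, e.Nonempty) (hT₀ : T.edges.Nonempty) :
    ∃ g : ℕ → Finset W, (∀ i < #T.edges, g i ∈ T.edges) ∧
      (∀ e ∈ T.edges, ∃ i < #T.edges, g i = e) ∧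
      (∀ i, 0 < i → i < #T.edges → #(g i ∩ prefixUnion g i) = 1) ∧
      ∀ x, x ∈ prefixUnion g #T.edges := by
  obtain ⟨g, hmem, hinj, hglue⟩ := exists_greedy_ordering hT hne le_rfl
  have himage : (range #T.edges).image g = T.edges :=
    eq_of_subset_of_card_le (image_subset_iff.mpr fun i hi => hmem i (mem_range.mp hi))
      (by rw [card_image_of_injOn (by rwa [coe_range]), card_range])
  have hsurj : ∀ e ∈ T.edges, ∃ i < #T.edges, g i = e := by
    intro e he
    obtain ⟨i, hi, rfl⟩ := mem_image.mp (himage ▸ he)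
    exact ⟨i, mem_range.mp hi, rfl⟩
  refine ⟨g, hmem, hsurj, fun i hi0 hi => le_antisymm
    (card_inter_prefixUnion_le_one hnc hmem hinj hglue hi) (hglue i hi0 hi).card_pos, fun x => ?_⟩
  obtain ⟨e₀, he₀⟩ := hT₀
  obtain ⟨e, he, hxe⟩ := hT.exists_mem_edge ⟨e₀, he₀, hne e₀ he₀⟩ x
  obtain ⟨i, hi, rfl⟩ := hsurj e he
  exact subset_prefixUnion hi hxe

variable {V : Type*} [DecidableEq V]

def induce (H : FinsetHypergraph V) (S : Finset V) : FinsetHypergraph V :=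
  ⟨H.edges.filter (· ⊆ S)⟩

@[simp]
theorem mem_induce_edges {H : FinsetHypergraph V} {S e : Finset V} :
    e ∈ (H.induce S).edges ↔ e ∈ H.edges ∧ e ⊆ S :=
  mem_filter

theorem induce_edges_mono {H : FinsetHypergraph V} {S S' : Finset V} (h : S ⊆ S') :
    (H.induce S).edges ⊆ (H.induce S').edges :=
  fun _ he =>
    mem_induce_edges.mpr ⟨(mem_induce_edges.mp he).1, (mem_induce_edges.mp he).2.trans h⟩

theorem Uniform.induce {H : FinsetHypergraph V} {r : ℕ} (hH : H.Uniform r) (S : Finset V) :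
    (H.induce S).Uniform r :=
  fun e he => hH e (mem_induce_edges.mp he).1

def IsPrefixCopy (H : FinsetHypergraph V) (g : ℕ → Finset W) (k : ℕ) (φ : W → V) : Prop :=
  Set.InjOn φ (prefixUnion g k) ∧ ∀ j < k, (g j).image φ ∈ H.edges

variable {H H' : FinsetHypergraph V} {g : ℕ → Finset W} {k : ℕ} {φ : W → V}

theorem IsPrefixCopy.mono (hφ : H.IsPrefixCopy g k φ) (hH : H.edges ⊆ H'.edges) :
    H'.IsPrefixCopy g k φ :=
  ⟨hφ.1, fun j hj => hH (hφ.2 j hj)⟩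

theorem IsPrefixCopy.mem_of_induce {S : Finset V} (hφ : (H.induce S).IsPrefixCopy g k φ) {x : W}
    (hx : x ∈ prefixUnion g k) : φ x ∈ S := by
  obtain ⟨j, hj, hxj⟩ := mem_prefixUnion.mp hx
  exact (mem_induce_edges.mp (hφ.2 j hj)).2 (mem_image_of_mem φ hxj)

theorem exists_isPrefixCopy_one [Nonempty V] {e : Finset V} (he : e ∈ H.edges)
    (hcard : #(g 0) = #e) : ∃ φ, H.IsPrefixCopy g 1 φ := by
  obtain ⟨φ, hφ⟩ := (g 0 : Set W).toFinite.exists_bijOn_of_encard_eq (t := (e : Set V))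
    (by simp [hcard])
  have hg : prefixUnion g 1 = g 0 := by simp [prefixUnion]
  refine ⟨φ, hg ▸ hφ.injOn, fun j hj => ?_⟩
  have himage : (g 0).image φ = e := coe_inj.mp (by rw [coe_image, hφ.image_eq])
  rw [Nat.lt_one_iff.mp hj, himage]
  exact he

theorem IsPrefixCopy.exists_succ {w : W} {u : V} {e : Finset V}
    (hw : g k ∩ prefixUnion g k = {w}) (hcard : #(g k) = #e) (hφ : H.IsPrefixCopy g k φ)
    (hφw : φ w = u) (he : e ∈ H.edges) (hu : u ∈ e)
    (havoid : ∀ x ∈ prefixUnion g k, φ x ∉ e.erase u) :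
    ∃ ψ, H.IsPrefixCopy g (k + 1) ψ := by
  have hwgU : w ∈ g k ∩ prefixUnion g k := hw ▸ mem_singleton_self w
  have hwg : w ∈ g k := (mem_inter.mp hwgU).1
  have hwU : w ∈ prefixUnion g k := (mem_inter.mp hwgU).2
  have hdisj : Disjoint (prefixUnion g k) ((g k).erase w) := disjoint_left.mpr fun x hxU hx =>
    ne_of_mem_erase hx (mem_singleton.mp (hw ▸ mem_inter.mpr ⟨mem_of_mem_erase hx, hxU⟩))
  have : Nonempty V := ⟨u⟩
  obtain ⟨ψ, hψφ, hψinj, hψimg⟩ := exists_injOn_union_image_eq hφ.1 hdisj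
    (disjoint_left.mpr fun y hy hye => by
      obtain ⟨x, hx, rfl⟩ := mem_image.mp hy
      exact havoid x hx hye)
    (by rw [card_erase_of_mem hwg, card_erase_of_mem hu, hcard])
  have hunion : prefixUnion g (k + 1) = prefixUnion g k ∪ (g k).erase w := by
    rw [prefixUnion_succ]
    ext x
    simp only [mem_union, mem_erase]
    by_cases hxw : x = w
    · subst hxw; simp [hwU]
    · simp [hxw]
  refine ⟨ψ, hunion ▸ hψinj, fun j hj => ?_⟩
  rcases Nat.lt_succ_iff_lt_or_eq.mp hj with hj | rfl
  · rw [image_congr (hψφ.mono (coe_subset.mpr (subset_prefixUnion hj)))]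
    exact hφ.2 j hj
  · rw [← insert_erase hwg, image_insert, hψimg, hψφ hwU, hφw, insert_erase hu]
    exact he

theorem Proper.ite_last {H : FinsetHypergraph V} {S L : Finset V} {t : ℕ} {c₀ : V → Fin t}
    (hc₀ : (H.induce (S \ L)).Proper c₀) (hS : ∀ e ∈ H.edges, e ⊆ S)
    (hL : ∀ e ∈ H.edges, ¬ e ⊆ L) :
    H.Proper fun x => if x ∈ L then Fin.last t else (c₀ x).castSucc := by
  intro e he hmono
  obtain ⟨x, hxe, hxL⟩ := not_subset.mp (hL e he)
  by_cases hmeet : ∃ y ∈ e, y ∈ L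
  · obtain ⟨y, hye, hyL⟩ := hmeet
    have := hmono x hxe y hye
    simp only [hxL, hyL, if_false, if_true] at this
    exact (Fin.castSucc_lt_last _).ne this
  · push Not at hmeet
    have he' : e ∈ (H.induce (S \ L)).edges :=
      mem_induce_edges.mpr ⟨he, fun y hy => mem_sdiff.mpr ⟨hS e he hy, hmeet y hy⟩⟩
    refine hc₀ e he' fun y hy z hz => ?_
    have := hmono y hy z hz
    simp only [hmeet y hy, hmeet z hz, if_false] at this
    exact Fin.castSucc_injective _ this

theorem exists_proper_of_not_isPrefixCopy {r : ℕ} (hr : 1 ≤ r) {t : ℕ} (ht : 1 ≤ t)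
    (hcard : ∀ i < t, #(g i) = r)
    (hglue : ∀ i, 0 < i → i < t → #(g i ∩ prefixUnion g i) = 1)
    (H : FinsetHypergraph V) (hH : H.Uniform r) (hfree : ∀ φ, ¬ H.IsPrefixCopy g t φ) :
    ∃ c : V → Fin t, H.Proper c := by
  induction t, ht using Nat.le_induction generalizing H with
  | base =>
    refine ⟨fun _ => 0, fun e he => ?_⟩
    obtain ⟨u, -⟩ := card_pos.mp (by rw [hH e he]; omega : 0 < #e)
    have : Nonempty V := ⟨u⟩
    obtain ⟨φ, hφ⟩ := exists_isPrefixCopy_one he (by rw [hcard 0 one_pos, hH e he])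
    exact absurd hφ (hfree φ)
  | succ t ht ih =>
    obtain ⟨w, hw⟩ := card_eq_one.mp (hglue t (by omega) t.lt_succ_self)
    have hwU : w ∈ prefixUnion g t := (mem_inter.mp (hw ▸ mem_singleton_self w)).2
    obtain ⟨L, hL, hpeel⟩ := Finset.exists_peeling
      (fun S u => ∃ φ, (H.induce S).IsPrefixCopy g t φ ∧ φ w = u)
      (fun S S' _ hSS' ⟨φ, hφ, hφw⟩ => ⟨φ, hφ.mono (induce_edges_mono hSS'), hφw⟩)
      (fun S _ ⟨φ, hφ, hφw⟩ => hφw ▸ hφ.mem_of_induce hwU)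
      (H.edges.biUnion id)
    obtain ⟨c₀, hc₀⟩ :=
      ih (fun i hi => hcard i (by omega)) (fun i h0 hi => hglue i h0 (by omega))
      (H.induce (H.edges.biUnion id \ L)) (hH.induce _) (fun φ hφ => hL (φ w) ⟨φ, hφ, rfl⟩)
    refine ⟨_, hc₀.ite_last (fun e he => subset_biUnion_of_mem id he) fun e he heL => ?_⟩
    obtain ⟨u, hu, φ, hφ, hφw⟩ := hpeel e heL (card_pos.mp (by rw [hH e he]; omega))
    obtain ⟨ψ, hψ⟩ := (hφ.mono (filter_subset _ _)).exists_succ hw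
      (by rw [hcard t t.lt_succ_self, hH e he]) hφw he hu
      (fun x hx hxe => (mem_sdiff.mp (hφ.mem_of_induce hx)).2 hxe)
    exact hfree ψ hψ

end FinsetHypergraph

theorem stmt4_general {V : Type*} [DecidableEq V] (r t : ℕ) (hr : 2 ≤ r) (ht : 1 ≤ t)
    (H : FinsetHypergraph V) (hH : H.Uniform r)
    {W : Type*} [DecidableEq W] (T : FinsetHypergraph W)
    (hT : T.IsHypertree) (hu : T.Uniform r) (hte : T.edges.card = t)
    (hfree : ¬ H.ContainsCopy T) :
    ∃ c : V → Fin t, H.Proper c := by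
  obtain ⟨hconn, -, hnc⟩ := hT
  have hne : ∀ e ∈ T.edges, e.Nonempty := fun e he => card_pos.mp (by rw [hu e he]; omega)
  obtain ⟨g, hmem, hsurj, hglue, hcover⟩ :=
    FinsetHypergraph.exists_tree_ordering hconn hnc hne (card_pos.mp (by omega))
  rw [hte] at hmem hsurj hglue hcover
  refine FinsetHypergraph.exists_proper_of_not_isPrefixCopy (by omega) ht
    (fun i hi => hu _ (hmem i hi)) hglue H hH fun φ hφ =>
      hfree ⟨φ, fun a b hab => hφ.1 (hcover a) (hcover b) hab, fun e he => ?_⟩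
  obtain ⟨i, hi, rfl⟩ := hsurj e he
  exact hφ.2 i hi

/-- If an `r`-uniform hypergraph `H` contains no copy of a given `r`-tree `T` with
`t` edges, then `H` admits a proper coloring with `t` colors. -/
theorem stmt4 {V : Type*} [Fintype V] [DecidableEq V] (r t : ℕ) (hr : 2 ≤ r) (ht : 1 ≤ t)
    (H : FinsetHypergraph V) (hH : H.Uniform r)
    {W : Type*} [Fintype W] [DecidableEq W] (T : FinsetHypergraph W)
    (hT : T.IsHypertree) (hu : T.Uniform r) (hte : T.edges.card = t)
    (hfree : ¬ H.ContainsCopy T) :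
    ∃ c : V → Fin t, H.Proper c :=
  stmt4_general r t hr ht H hH T hT hu hte hfree
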